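/- arXiv:2010.09357 — 3 statements merged into one kernel-verified Lean document; each statement's English description precedes it below -/
import Mathlib

section
/- Let X be a real Banach space and x ∈ S_X. Then x is a Δ-point if and only if for every ε > 0 and every slice S(f, α) of B_X (with f ∈ X*, ‖f‖ = 1, α > 0) such that x ∈ S(f, α), there exist g ∈ X* with ‖g‖ = 1 and α₁ > 0 such that S(g, α₁) ⊆ S(f, α) and ‖x − z‖ ≥ 2 − ε for all z ∈ S(g, α₁). -/
variable {X : Type*} [NormedAddCommGroup X] [NormedSpace ℝ X] [CompleteSpace X]

/-- The slice `S(f, α)` of the closed unit ball of `X`. -/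
def ballSlice (f : X →L[ℝ] ℝ) (α : ℝ) : Set X := {y | ‖y‖ ≤ 1 ∧ f y > 1 - α}

/-- `x` is a Δ-point: for every slice of the unit ball containing `x` and every `ε > 0`
there is a point of the slice at distance `> 2 - ε` from `x`. -/
def IsDeltaPoint (x : X) : Prop :=
  ∀ (f : X →L[ℝ] ℝ), ‖f‖ = 1 → ∀ α : ℝ, 0 < α → x ∈ ballSlice f α →
    ∀ ε : ℝ, 0 < ε → ∃ y ∈ ballSlice f α, ‖x - y‖ > 2 - ε

/-!
Given a slice `S(f, α) ∋ x`, shrink it to `S(f, α')` with `α' < α` and use the Δ-property there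
to find `y` almost antipodal to `x`, witnessed by a functional `g` of norm at most one with
`g y ≈ 1` and `g x ≈ -1`. For large `t`, a thin slice of the normalized functional `f + t g`
around its value at `y` forces both `f z ≈ f y` and `g z ≈ 1`: the first keeps it inside
`S(f, α)`, the second keeps it at distance about `g z - g x ≈ 2` from `x`.
Conversely, slices of norm-one functionals are nonempty.
-/

section

variable {E : Type*} [NormedAddCommGroup E] [NormedSpace ℝ E]

theorem abs_apply_le_one {f : E →L[ℝ] ℝ} (hf : ‖f‖ ≤ 1) {z : E} (hz : ‖z‖ ≤ 1) :
    |f z| ≤ 1 :=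
  (f.unit_le_opNorm z hz).trans hf

theorem lt_apply_of_lt_add_smul_apply {f g : E →L[ℝ] ℝ} (hf : ‖f‖ ≤ 1) (hg : ‖g‖ ≤ 1)
    {t c : ℝ} (ht : 0 ≤ t) {z : E} (hz : ‖z‖ ≤ 1) (hc : c < (f + t • g) z) :
    c - t < f z ∧ c - 1 < t * g z := by
  have hfz := (abs_le.1 (abs_apply_le_one hf hz)).2
  have hgz := (abs_le.1 (abs_apply_le_one hg hz)).2
  have htgz : t * g z ≤ t := by nlinarith
  simp only [add_apply, smul_apply, smul_eq_mul] at hc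
  constructor <;> linarith

theorem exists_apply_lt_of_two_sub_lt_norm_sub {x y : E} (hx : ‖x‖ ≤ 1) (hy : ‖y‖ ≤ 1)
    {δ : ℝ} (hxy : 2 - δ < ‖x - y‖) :
    ∃ g : E →L[ℝ] ℝ, ‖g‖ ≤ 1 ∧ 1 - δ < g y ∧ g x < δ - 1 := by
  obtain ⟨g, hg, hgyx⟩ := exists_dual_vector'' ℝ (y - x)
  have hgx := (abs_le.1 (abs_apply_le_one hg hx)).1
  have hgy := (abs_le.1 (abs_apply_le_one hg hy)).2
  rw [map_sub, norm_sub_rev, RCLike.ofReal_real_eq_id, id] at hgyx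
  exact ⟨g, hg, by linarith, by linarith⟩

theorem ballSlice_nonempty {g : E →L[ℝ] ℝ} {α : ℝ} (h : 1 - α < ‖g‖) :
    (ballSlice g α).Nonempty := by
  obtain ⟨u, hu, hgu⟩ := g.exists_lt_apply_of_lt_opNorm h
  rw [Real.norm_eq_abs] at hgu
  rcases abs_choice (g u) with hu' | hu'
  · exact ⟨u, hu.le, by linarith⟩
  · exact ⟨-u, by simpa using hu.le, by simp only [map_neg]; linarith⟩

theorem ballSlice_inv_norm_smul {h : E →L[ℝ] ℝ} (hh : h ≠ 0) (r : ℝ) :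
    ballSlice (‖h‖⁻¹ • h) (1 - r / ‖h‖) = {z | ‖z‖ ≤ 1 ∧ r < h z} := by
  have hpos : 0 < ‖h‖ := norm_pos_iff.2 hh
  ext z
  simp only [ballSlice, Set.mem_ofPred_eq, smul_apply, smul_eq_mul,
    sub_sub_cancel, gt_iff_lt, inv_mul_eq_div, div_lt_div_iff_of_pos_right hpos]

theorem exists_ballSlice_eq {h : E →L[ℝ] ℝ} (hh : h ≠ 0) {r : ℝ} (hr : r < ‖h‖) :
    ∃ (g : E →L[ℝ] ℝ) (α : ℝ), ‖g‖ = 1 ∧ 0 < α ∧ ballSlice g α = {z | ‖z‖ ≤ 1 ∧ r < h z} := by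
  have hpos : 0 < ‖h‖ := norm_pos_iff.2 hh
  refine ⟨‖h‖⁻¹ • h, 1 - r / ‖h‖, ?_, ?_, ballSlice_inv_norm_smul hh r⟩
  · rw [norm_smul, norm_inv, norm_norm, inv_mul_cancel₀ hpos.ne']
  · rw [sub_pos, div_lt_one hpos]
    exact hr

theorem exists_far_subslice_of_add_smul {f g : E →L[ℝ] ℝ} (hf : ‖f‖ ≤ 1) (hg : ‖g‖ ≤ 1)
    {x y : E} (hy : ‖y‖ ≤ 1) {α δ ε η t : ℝ} (ht : 0 < t) (hη : 0 < η)
    (hgy : 1 - δ < g y) (hgx : g x < δ - 1) (hfy : 1 - α + t * δ + η ≤ f y)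
    (hε : 2 + η ≤ t * (ε - 2 * δ)) (hpos : 0 < f y + t * g y) :
    ∃ (g' : E →L[ℝ] ℝ) (α₁ : ℝ), ‖g'‖ = 1 ∧ 0 < α₁ ∧
      ballSlice g' α₁ ⊆ ballSlice f α ∧ ∀ z ∈ ballSlice g' α₁, 2 - ε ≤ ‖x - z‖ := by
  set h := f + t • g
  have hhy : h y = f y + t * g y := rfl
  have hh : h ≠ 0 := fun h0 => by simp [← hhy, h0] at hpos
  have hyh : h y ≤ ‖h‖ := (le_abs_self _).trans (h.unit_le_opNorm y hy)
  obtain ⟨g', α₁, hg', hα₁, hslice⟩ := exists_ballSlice_eq hh (r := h y - η) (by linarith)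
  have hfy1 := (abs_le.1 (abs_apply_le_one hf hy)).1
  have htgy : t * (1 - δ) < t * g y := mul_lt_mul_of_pos_left hgy ht
  refine ⟨g', α₁, hg', hα₁, ?_, ?_⟩ <;> rw [hslice] <;> rintro z ⟨hz, hhz⟩
  · exact ⟨hz, by linarith [(lt_apply_of_lt_add_smul_apply hf hg ht.le hz hhz).1]⟩
  · have hgz := (lt_apply_of_lt_add_smul_apply hf hg ht.le hz hhz).2
    have hgxz : g z - g x ≤ ‖x - z‖ := by
      rw [← map_sub, norm_sub_rev]
      exact (le_abs_self _).trans (by simpa using g.le_of_opNorm_le hg (z - x))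
    have htgx : t * g x < t * (δ - 1) := mul_lt_mul_of_pos_left hgx ht
    have : t * (2 - ε) < t * (g z - g x) := by nlinarith
    linarith [lt_of_mul_lt_mul_left this ht.le]

theorem IsDeltaPoint.exists_far_subslice {x : E} (hΔ : IsDeltaPoint x) {f : E →L[ℝ] ℝ}
    (hf : ‖f‖ = 1) {α : ℝ} (hα : 0 < α) (hx : x ∈ ballSlice f α) {ε : ℝ} (hε : 0 < ε)
    (hε1 : ε ≤ 1) :
    ∃ (g : E →L[ℝ] ℝ) (α₁ : ℝ), ‖g‖ = 1 ∧ 0 < α₁ ∧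
      ballSlice g α₁ ⊆ ballSlice f α ∧ ∀ z ∈ ballSlice g α₁, 2 - ε ≤ ‖x - z‖ := by
  obtain ⟨hx1, hfx⟩ := hx
  have hfx1 := (abs_le.1 (abs_apply_le_one hf.le hx1)).2
  -- `γ` is a quarter of the room that `x` leaves in `S(f, α)`
  set γ := (α - (1 - f x)) / 4
  have hγ : 0 < γ := by simp only [γ]; linarith
  set t := 2 * (2 + γ) / ε
  have ht : 4 ≤ t := by rw [le_div_iff₀ hε]; linarith
  set δ := min (ε / 4) (γ / t)
  have hδ : 0 < δ := lt_min (by positivity) (by positivity)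
  have htδ : t * δ ≤ γ := by
    rw [← le_div_iff₀' (by linarith)]
    exact min_le_right _ _
  have hδε : δ ≤ ε / 4 := min_le_left _ _
  obtain ⟨y, ⟨hy1, hfy⟩, hxy⟩ :=
    hΔ f hf (α - 2 * γ) (by simp only [γ]; linarith) ⟨hx1, by simp only [γ]; linarith⟩ δ hδ
  obtain ⟨g, hg, hgy, hgx⟩ := exists_apply_lt_of_two_sub_lt_norm_sub hx1 hy1 hxy
  have hfy1 := (abs_le.1 (abs_apply_le_one hf.le hy1)).1
  refine exists_far_subslice_of_add_smul (t := t) hf.le hg hy1 (by linarith) hγ hgy hgx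
    (by linarith) ?_ (by nlinarith)
  calc 2 + γ = t * (ε / 2) := by simp only [t]; field_simp
    _ ≤ t * (ε - 2 * δ) := by gcongr; linarith

end

theorem delta_point_iff_nested_slices_general (x : X) :
    IsDeltaPoint x ↔
      ∀ ε : ℝ, 0 < ε → ∀ (f : X →L[ℝ] ℝ), ‖f‖ = 1 → ∀ α : ℝ, 0 < α →
        x ∈ ballSlice f α →
        ∃ (g : X →L[ℝ] ℝ) (α₁ : ℝ), ‖g‖ = 1 ∧ 0 < α₁ ∧
          ballSlice g α₁ ⊆ ballSlice f α ∧ ∀ z ∈ ballSlice g α₁, ‖x - z‖ ≥ 2 - ε := by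
  refine ⟨fun hΔ ε hε f hf α hα hx => ?_, fun H f hf α hα hx ε hε => ?_⟩
  · obtain ⟨g, α₁, hg, hα₁, hsub, hfar⟩ :=
      hΔ.exists_far_subslice hf hα hx (lt_min hε one_pos) (min_le_right ε 1)
    exact ⟨g, α₁, hg, hα₁, hsub, fun z hz =>
      (sub_le_sub_left (min_le_left ε 1) 2).trans (hfar z hz)⟩
  · obtain ⟨g, α₁, hg, hα₁, hsub, hfar⟩ := H (ε / 2) (half_pos hε) f hf α hα hx
    obtain ⟨z, hz⟩ := ballSlice_nonempty (g := g) (by linarith)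
    exact ⟨z, hsub hz, by linarith [hfar z hz]⟩

theorem delta_point_iff_nested_slices (x : X) (hx : ‖x‖ = 1) :
    IsDeltaPoint x ↔
      ∀ ε : ℝ, 0 < ε → ∀ (f : X →L[ℝ] ℝ), ‖f‖ = 1 → ∀ α : ℝ, 0 < α →
        x ∈ ballSlice f α →
        ∃ (g : X →L[ℝ] ℝ) (α₁ : ℝ), ‖g‖ = 1 ∧ 0 < α₁ ∧
          ballSlice g α₁ ⊆ ballSlice f α ∧ ∀ z ∈ ballSlice g α₁, ‖x - z‖ ≥ 2 - ε :=
  delta_point_iff_nested_slices_general x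
end

section
/- Let M be a metric space and let x ≠ y ∈ M. The following are equivalent: (A) for every function f : M → ℝ with Lipschitz constant exactly 1, every α ∈ (0, 1) with f(x) − f(y) > (1 − α)·d(x, y), and every ε > 0, there exist u ≠ v ∈ M such that f(u) − f(v) > (1 − α)·d(u, v) and ‖m_{x,y} − m_{u,v}‖ > 2 − ε; (B) the pair (x, y) satisfies the local Δ-condition. (Condition (A) says exactly that the molecule m_{x,y} is a Δ-point of the unit ball of the Lipschitz-free space over M, tested on molecules.) -/
/-!
(B) ⇒ (A): for a short steep pair `(u, v)`, the function
`max (d(·, y)) (d(v, y) + 2 d(u, v) - d(·, v))` is 1-Lipschitz, drops by exactly `d(u, v)` from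
`v` to `u` and by at least `d(x, y) - 2 d(u, v)` from `x` to `y`, so it witnesses
`‖m_{x,y} - m_{u,v}‖ > 2 - ε`.

(A) ⇒ (B): with `D = f x - f y` pick `θ < c < D / d(x, y)` and cut `f - f y` off between the cones
`D - c d(·, x)` and `c d(·, y)`. Since the cones have slope `c`, a pair steeper than `c` for the
truncation is steep for `f` and satisfies `c (d(u, x) + d(v, y)) < D - c d(u, v)`. Applying (A)
to the truncation, rescaled to Lipschitz constant exactly 1, yields such a pair with
`‖m_{x,y} - m_{u,v}‖ > 2 - δ`, which forces `d(u, x) + d(v, y) > (1 - δ) (d(x, y) + d(u, v))`.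
For `δ` small these two estimates bound `d(u, v)` by `ε`.
-/

open NNReal

def LocalDeltaCondition {M : Type*} [MetricSpace M] (x y : M) : Prop :=
  ∀ f : M → ℝ, LipschitzWith 1 f → ∀ θ : ℝ, 0 < θ → θ < 1 →
    f x - f y > θ * dist x y → ∀ ε : ℝ, 0 < ε →
      ∃ u v : M, 0 < dist u v ∧ dist u v < ε ∧ f u - f v > θ * dist u v

section Lipschitz

variable {α β : Type*} [PseudoMetricSpace α] [PseudoMetricSpace β]

theorem isClosed_setOf_lipschitzWith_constant (f : α → β) :
    IsClosed {K : ℝ≥0 | LipschitzWith K f} := by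
  simp_rw [lipschitzWith_iff_dist_le_mul, Set.ofPred_forall]
  exact isClosed_iInter fun p ↦ isClosed_iInter fun q ↦
    isClosed_le continuous_const (by fun_prop)

theorem LipschitzWith.exists_isLeast {K : ℝ≥0} {f : α → β} (hf : LipschitzWith K f) :
    ∃ L, IsLeast {K | LipschitzWith K f} L :=
  ⟨_, (isClosed_setOf_lipschitzWith_constant f).isLeast_csInf ⟨K, hf⟩ (OrderBot.bddBelow _)⟩

theorem LipschitzWith.const_mul {K : ℝ≥0} {f : α → ℝ} (hf : LipschitzWith K f) (c : ℝ) :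
    LipschitzWith (‖c‖₊ * K) fun t ↦ c * f t :=
  (lipschitzWith_smul c).comp hf

theorem isLeast_lipschitzWith_inv_mul {f : α → ℝ} {L : ℝ≥0}
    (hL : IsLeast {K | LipschitzWith K f} L) (hL0 : L ≠ 0) :
    IsLeast {K | LipschitzWith K fun t ↦ (L : ℝ)⁻¹ * f t} 1 := by
  refine ⟨?_, fun K hK ↦ ?_⟩
  · simpa [nnnorm_inv, nnnorm_eq, hL0] using hL.1.const_mul (L : ℝ)⁻¹
  · have hf : LipschitzWith (L * K) f := by
      simpa [nnnorm_eq, hL0] using hK.const_mul (L : ℝ)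
    exact (le_mul_iff_one_le_right (pos_iff_ne_zero.mpr hL0)).mp (hL.2 hf)

theorem LipschitzWith.sub_le_dist {h : α → ℝ} (hh : LipschitzWith 1 h) (p q : α) :
    h p - h q ≤ dist p q := by
  simpa [add_comm] using hh.le_add_mul p q

theorem lipschitzWith_one_mul_dist {c : ℝ} (hc : |c| ≤ 1) (z : α) :
    LipschitzWith 1 fun t ↦ c * dist t z :=
  ((LipschitzWith.dist_left z).const_mul c).weaken (by simpa [← NNReal.coe_le_coe] using hc)

end Lipschitz

section PseudoMetric

variable {M : Type*} [PseudoMetricSpace M]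

theorem exists_lipschitzWith_one_almost_norming (x y u v : M) :
    ∃ h : M → ℝ, LipschitzWith 1 h ∧ dist x y - 2 * dist u v ≤ h x - h y ∧
      h u - h v = -dist u v := by
  set b := dist u v
  have hcone : LipschitzWith 1 fun t ↦ dist v y + 2 * b - dist t v :=
    LipschitzWith.of_le_add fun p q ↦ by linarith [dist_triangle q p v, dist_comm p q]
  refine ⟨fun t ↦ max (dist t y) (dist v y + 2 * b - dist t v), ?_, ?_, ?_⟩
  · simpa using (LipschitzWith.dist_left y).max hcone
  · have hy : max (dist y y) (dist v y + 2 * b - dist y v) ≤ 2 * b :=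
      max_le (by simp [b]) (by linarith [dist_comm y v])
    linarith [le_max_left (dist x y) (dist v y + 2 * b - dist x v)]
  · have := dist_triangle u v y
    simp only [dist_self, b]
    rw [max_eq_right, max_eq_right] <;> linarith [dist_comm u v, dist_nonneg (x := u) (y := v)]

def coneTruncation (f : M → ℝ) (x y : M) (c : ℝ) (t : M) : ℝ :=
  max (min (f t - f y) (f x - f y - c * dist t x)) (c * dist t y)

theorem lipschitzWith_coneTruncation {f : M → ℝ} (hf : LipschitzWith 1 f) (x y : M) {c : ℝ}
    (hc₀ : 0 ≤ c) (hc₁ : c ≤ 1) : LipschitzWith 1 (coneTruncation f x y c) := by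
  have hc : |c| ≤ 1 := abs_le.2 ⟨by linarith, hc₁⟩
  have h₁ : LipschitzWith 1 fun t ↦ f t - f y := by
    simpa using hf.sub (LipschitzWith.const (f y))
  have h₂ : LipschitzWith 1 fun t ↦ f x - f y - c * dist t x := by
    simpa using (LipschitzWith.const (f x - f y)).sub (lipschitzWith_one_mul_dist hc x)
  unfold coneTruncation
  simpa using (h₁.min h₂).max (lipschitzWith_one_mul_dist hc y)

theorem coneTruncation_left {f : M → ℝ} {x y : M} {c : ℝ} (h : c * dist x y ≤ f x - f y) :
    coneTruncation f x y c x = f x - f y := by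
  simp [coneTruncation, h]

theorem coneTruncation_right (f : M → ℝ) (x y : M) (c : ℝ) : coneTruncation f x y c y = 0 := by
  simp [coneTruncation]

theorem sub_le_and_mul_dist_le_of_coneTruncation {f : M → ℝ} {x y u v : M} {c : ℝ} (hc : 0 ≤ c)
    (huv : c * dist u v < coneTruncation f x y c u - coneTruncation f x y c v) :
    coneTruncation f x y c u - coneTruncation f x y c v ≤ f u - f v ∧
      c * (dist u x + dist v y) ≤
        f x - f y - (coneTruncation f x y c u - coneTruncation f x y c v) := by
  have hy : c * dist u y ≤ c * dist u v + c * dist v y := by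
    rw [← mul_add]; exact mul_le_mul_of_nonneg_left (dist_triangle u v y) hc
  have hx : c * dist v x ≤ c * dist u v + c * dist u x := by
    rw [← mul_add]; exact mul_le_mul_of_nonneg_left (dist_triangle_left v x u) hc
  set F := coneTruncation f x y c
  -- Both cones have slope `c`: the one at `y` cannot be active at `u`, the one at `x` not at `v`.
  have hFv : c * dist v y ≤ F v := le_max_right _ _
  have hu : F u = min (f u - f y) (f x - f y - c * dist u x) :=
    max_eq_left <| not_lt.1 fun h ↦ by
      have : F u = c * dist u y := max_eq_right h.le
      linarith
  have hFu₁ : F u ≤ f u - f y := hu ▸ min_le_left _ _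
  have hFu₂ : F u ≤ f x - f y - c * dist u x := hu ▸ min_le_right _ _
  have hv : f v - f y ≤ F v := by
    have : min (f v - f y) (f x - f y - c * dist v x) ≤ F v := le_max_left _ _
    rcases min_le_iff.1 this with h | h
    · exact h
    · linarith
  constructor <;> linarith

end PseudoMetric

section Molecules

variable {M : Type*} [MetricSpace M]

theorem lt_dist_add_dist_of_slope_sub_slope_gt {x y u v : M} {h : M → ℝ} (hh : LipschitzWith 1 h)
    (hxy : x ≠ y) (huv : u ≠ v) {δ : ℝ}
    (hgap : (h x - h y) / dist x y - (h u - h v) / dist u v > 2 - δ) :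
    (1 - δ) * (dist x y + dist u v) < dist u x + dist v y := by
  have hxy' := dist_pos.2 hxy
  have huv' := dist_pos.2 huv
  have h₁ : (h x - h y) / dist x y ≤ 1 := (div_le_one hxy').2 (hh.sub_le_dist x y)
  have h₂ : (h v - h u) / dist u v ≤ 1 := (div_le_one huv').2 (dist_comm u v ▸ hh.sub_le_dist v u)
  have hflip : (h u - h v) / dist u v = -((h v - h u) / dist u v) := by ring
  have h₃ : (1 - δ) * dist x y < h x - h y := (lt_div_iff₀ hxy').1 (by linarith)
  have h₄ : (1 - δ) * dist u v < h v - h u := (lt_div_iff₀ huv').1 (by linarith)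
  linarith [hh.sub_le_dist x u, hh.sub_le_dist v y, dist_comm x u]

/-- Condition (A); `h` witnesses `‖m_{x,y} - m_{u,v}‖ > 2 - ε` via the supremum formula. -/
def MoleculeDeltaCondition (x y : M) : Prop :=
  ∀ f : M → ℝ, LipschitzWith 1 f → (∀ K : ℝ≥0, LipschitzWith K f → 1 ≤ K) →
    ∀ α : ℝ, 0 < α → α < 1 → f x - f y > (1 - α) * dist x y → ∀ ε : ℝ, 0 < ε →
      ∃ u v : M, u ≠ v ∧ f u - f v > (1 - α) * dist u v ∧
        ∃ h : M → ℝ, LipschitzWith 1 h ∧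
          (h x - h y) / dist x y - (h u - h v) / dist u v > 2 - ε

theorem MoleculeDeltaCondition.exists_of_lipschitzWith_one {x y : M}
    (hA : MoleculeDeltaCondition x y) {F : M → ℝ} (hF : LipschitzWith 1 F) {c : ℝ} (hc : 0 < c)
    (hFxy : c * dist x y < F x - F y) {δ : ℝ} (hδ : 0 < δ) :
    ∃ u v : M, u ≠ v ∧ c * dist u v < F u - F v ∧ ∃ h : M → ℝ, LipschitzWith 1 h ∧
      (h x - h y) / dist x y - (h u - h v) / dist u v > 2 - δ := by
  -- (A) only accepts functions of Lipschitz constant exactly 1: rescale by the least one.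
  obtain ⟨L, hL⟩ := hF.exists_isLeast
  have hcL : c < L := by
    refine lt_of_mul_lt_mul_right ?_ (dist_nonneg : 0 ≤ dist x y)
    linarith [hL.1.le_add_mul x y]
  have hL0 : (0 : ℝ) < L := hc.trans hcL
  have hL' := isLeast_lipschitzWith_inv_mul hL (by exact_mod_cast hL0.ne')
  have hrescale : ∀ p q : M, (L : ℝ)⁻¹ * F p - (L : ℝ)⁻¹ * F q > (1 - (1 - c / L)) * dist p q ↔
      c * dist p q < F p - F q := fun p q ↦ by
    rw [sub_sub_cancel, ← mul_sub, div_mul_eq_mul_div, div_eq_inv_mul, gt_iff_lt,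
      mul_lt_mul_iff_right₀ (inv_pos.2 hL0)]
  obtain ⟨u, v, huv, hsteep, hnorm⟩ := hA _ hL'.1 (fun K hK ↦ hL'.2 hK) (1 - c / L)
    (sub_pos.2 ((div_lt_one hL0).2 hcL)) (sub_lt_self _ (div_pos hc hL0))
    ((hrescale x y).2 hFxy) δ hδ
  exact ⟨u, v, huv, (hrescale u v).1 hsteep, hnorm⟩

theorem localDeltaCondition_of_moleculeDeltaCondition {x y : M} (hxy : x ≠ y)
    (hA : MoleculeDeltaCondition x y) : LocalDeltaCondition x y := by
  intro f hf θ hθ₀ _ hfxy ε hε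
  set a := dist x y
  set D := f x - f y
  have ha : 0 < a := dist_pos.2 hxy
  have hD : 0 < D := lt_trans (by positivity) hfxy
  obtain ⟨c, hc, hcD⟩ : ∃ c, max θ (D / (a + 2 * ε)) < c ∧ c < D / a :=
    exists_between (max_lt ((lt_div_iff₀ ha).2 hfxy) (div_lt_div_of_pos_left hD ha (by linarith)))
  rw [max_lt_iff] at hc
  have hc₀ : 0 < c := hθ₀.trans hc.1
  have hca : c * a < D := (lt_div_iff₀ ha).1 hcD
  have hc₁ : c ≤ 1 := hcD.le.trans ((div_le_one ha).2 (hf.sub_le_dist x y))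
  have hFxy : c * a < coneTruncation f x y c x - coneTruncation f x y c y := by
    rwa [coneTruncation_left hca.le, coneTruncation_right, sub_zero]
  -- chosen so that `c * (1 - δ) = D / (a + 2 * ε)`, which turns the estimates into `d(u, v) < ε`
  set δ := 1 - D / (c * (a + 2 * ε))
  have hδ : 0 < δ :=
    sub_pos.2 ((div_lt_one (by positivity)).2 ((div_lt_iff₀ (by positivity)).1 hc.2))
  obtain ⟨u, v, huv, hsteep, h, hh, hgap⟩ :=
    hA.exists_of_lipschitzWith_one (lipschitzWith_coneTruncation hf x y hc₀.le hc₁) hc₀ hFxy hδ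
  obtain ⟨hfuv, hcuv⟩ := sub_le_and_mul_dist_le_of_coneTruncation hc₀.le hsteep
  have hsum := lt_dist_add_dist_of_slope_sub_slope_gt hh hxy huv hgap
  have hb : 0 < dist u v := dist_pos.2 huv
  refine ⟨u, v, hb, ?_, by linarith [mul_lt_mul_of_pos_right hc.1 hb]⟩
  have hk : 0 < D / (a + 2 * ε) := by positivity
  have hcδ : c * (1 - δ) = D / (a + 2 * ε) := by
    simp only [δ, sub_sub_cancel]
    field_simp
  have : D / (a + 2 * ε) * (a + 2 * dist u v) < D / (a + 2 * ε) * (a + 2 * ε) := by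
    rw [div_mul_cancel₀ _ (by positivity)]
    nlinarith [mul_lt_mul_of_pos_left hsum hc₀, mul_lt_mul_of_pos_right hc.2 hb]
  linarith [lt_of_mul_lt_mul_left this hk.le]

theorem moleculeDeltaCondition_of_localDeltaCondition {x y : M} (hxy : x ≠ y)
    (hB : LocalDeltaCondition x y) : MoleculeDeltaCondition x y := by
  intro f hf _ α hα₀ hα₁ hfxy ε hε
  have ha := dist_pos.2 hxy
  obtain ⟨u, v, huv₀, huvε, hsteep⟩ :=
    hB f hf (1 - α) (by linarith) (by linarith) hfxy (ε * dist x y / 2) (by positivity)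
  obtain ⟨h, hh, hxy', huv'⟩ := exists_lipschitzWith_one_almost_norming x y u v
  refine ⟨u, v, dist_pos.1 huv₀, hsteep, h, hh, ?_⟩
  have : 1 - ε < (h x - h y) / dist x y := by
    rw [lt_div_iff₀ ha]
    linarith
  rw [huv', neg_div, div_self huv₀.ne']
  linarith

end Molecules

/-- The molecule `m_{x,y}` is a Δ-point (tested on molecules) if and only if the pair
`(x, y)` satisfies the local Δ-condition. -/
theorem molecule_delta_point_iff_localDelta {M : Type*} [MetricSpace M]
    (x y : M) (hxy : x ≠ y) :
    (∀ f : M → ℝ, LipschitzWith 1 f → (∀ K : ℝ≥0, LipschitzWith K f → 1 ≤ K) →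
      ∀ α : ℝ, 0 < α → α < 1 → f x - f y > (1 - α) * dist x y → ∀ ε : ℝ, 0 < ε →
        ∃ u v : M, u ≠ v ∧ f u - f v > (1 - α) * dist u v ∧
          ∃ h : M → ℝ, LipschitzWith 1 h ∧
            (h x - h y) / dist x y - (h u - h v) / dist u v > 2 - ε)
    ↔ LocalDeltaCondition x y :=
  ⟨localDeltaCondition_of_moleculeDeltaCondition hxy,
    moleculeDeltaCondition_of_localDeltaCondition hxy⟩
end

section
/- Let X be a strictly convex real Banach space and let M be a compact subset of X, regarded as a metric space with the metric induced by the norm. Let x ≠ y ∈ M. The following are equivalent: (1) the pair (x, y) satisfies the local Δ-condition; (2) for every r with 0 < r < ‖x − y‖ there exists z ∈ M with ‖z − x‖ = r and ‖z − y‖ = ‖x − y‖ − r; (3) the segment [x, y] = {(1 − t)·x + t·y : t ∈ [0, 1]} is contained in M. -/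
open Finset

section MetricSpace

variable {N : Type*} [MetricSpace N] {θ ε : ℝ}

noncomputable def stepCost (θ ε : ℝ) (u v : N) : ℝ :=
  if dist u v < ε then θ * dist u v else dist u v

noncomputable def chainCost (θ ε : ℝ) (w : ℕ → N) (n : ℕ) : ℝ :=
  ∑ i ∈ range n, stepCost θ ε (w i) (w (i + 1))

def chainCosts (θ ε : ℝ) (u v : N) : Set ℝ :=
  {s | ∃ (w : ℕ → N) (n : ℕ), w 0 = u ∧ w n = v ∧ chainCost θ ε w n = s}

noncomputable def chainDist (θ ε : ℝ) (u v : N) : ℝ :=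
  sInf (chainCosts θ ε u v)

lemma stepCost_le_dist (hθ : θ ≤ 1) (u v : N) : stepCost θ ε u v ≤ dist u v := by
  unfold stepCost
  split_ifs
  · exact mul_le_of_le_one_left dist_nonneg hθ
  · rfl

lemma mul_dist_le_stepCost (hθ : θ ≤ 1) (u v : N) : θ * dist u v ≤ stepCost θ ε u v := by
  unfold stepCost
  split_ifs
  · rfl
  · exact mul_le_of_le_one_left dist_nonneg hθ

lemma chainCost_nonneg (hθ0 : 0 ≤ θ) (hθ1 : θ ≤ 1) (w : ℕ → N) (n : ℕ) :
    0 ≤ chainCost θ ε w n :=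
  sum_nonneg fun _ _ => (mul_nonneg hθ0 dist_nonneg).trans (mul_dist_le_stepCost hθ1 _ _)

lemma chainCosts_nonempty (u v : N) : (chainCosts θ ε u v).Nonempty :=
  ⟨_, fun i => if i = 0 then u else v, 1, rfl, rfl, rfl⟩

lemma bddBelow_chainCosts (hθ0 : 0 ≤ θ) (hθ1 : θ ≤ 1) (u v : N) :
    BddBelow (chainCosts θ ε u v) :=
  ⟨0, by rintro _ ⟨w, n, -, -, rfl⟩; exact chainCost_nonneg hθ0 hθ1 w n⟩

lemma chainDist_self (hθ0 : 0 ≤ θ) (hθ1 : θ ≤ 1) (u : N) : chainDist θ ε u u = 0 :=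
  le_antisymm (csInf_le (bddBelow_chainCosts hθ0 hθ1 u u) ⟨fun _ => u, 0, rfl, rfl, rfl⟩)
    (le_csInf (chainCosts_nonempty u u) fun _ ⟨w, n, _, _, hs⟩ =>
      hs ▸ chainCost_nonneg hθ0 hθ1 w n)

lemma chainDist_le_stepCost_add (hθ0 : 0 ≤ θ) (hθ1 : θ ≤ 1) (u v t : N) :
    chainDist θ ε u t ≤ stepCost θ ε u v + chainDist θ ε v t := by
  rw [← sub_le_iff_le_add']
  refine le_csInf (chainCosts_nonempty v t) ?_
  rintro _ ⟨w, n, hw0, hwn, rfl⟩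
  rw [sub_le_iff_le_add']
  refine csInf_le (bddBelow_chainCosts hθ0 hθ1 u t)
    ⟨fun i => if i = 0 then u else w (i - 1), n + 1, by simp, by simp [hwn], ?_⟩
  simp [chainCost, sum_range_succ', hw0, add_comm]

lemma lipschitzWith_chainDist (hθ0 : 0 ≤ θ) (hθ1 : θ ≤ 1) (t : N) :
    LipschitzWith 1 fun u : N => chainDist θ ε u t := by
  refine LipschitzWith.of_le_add fun u v => ?_
  linarith [chainDist_le_stepCost_add (ε := ε) hθ0 hθ1 u v t, stepCost_le_dist (ε := ε) hθ1 u v]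

lemma LocalDeltaCondition.chainDist_le {x y : N} (h : LocalDeltaCondition x y)
    (hθ0 : 0 < θ) (hθ1 : θ < 1) (hε : 0 < ε) : chainDist θ ε x y ≤ θ * dist x y := by
  by_contra! hgt
  obtain ⟨u, v, -, huv, hsteep⟩ := h (fun z => chainDist θ ε z y)
    (lipschitzWith_chainDist hθ0.le hθ1.le y) θ hθ0 hθ1
    (by simpa [chainDist_self hθ0.le hθ1.le] using hgt) ε hε
  have hcost : stepCost θ ε u v = θ * dist u v := if_pos huv
  linarith [chainDist_le_stepCost_add (ε := ε) hθ0.le hθ1.le u v y]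

/-- A step of length `≥ ε` costs `(1 - θ) ε` more than its discounted length. -/
lemma dist_lt_of_chainCost_le {w : ℕ → N} {n : ℕ} {γ : ℝ} (hθ0 : 0 ≤ θ) (hθ1 : θ ≤ 1)
    (hcost : chainCost θ ε w n ≤ θ * dist (w 0) (w n) + γ) (hγ : γ < (1 - θ) * ε) :
    ∀ i < n, dist (w i) (w (i + 1)) < ε := by
  intro j hj
  by_contra! hlong
  have hexcess : ∀ i ∈ range n,
      0 ≤ stepCost θ ε (w i) (w (i + 1)) - θ * dist (w i) (w (i + 1)) :=
    fun _ _ => sub_nonneg.2 (mul_dist_le_stepCost hθ1 _ _)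
  have hj_excess := single_le_sum hexcess (mem_range.2 hj)
  rw [sum_sub_distrib, ← mul_sum] at hj_excess
  have hstep : stepCost θ ε (w j) (w (j + 1)) = dist (w j) (w (j + 1)) := if_neg hlong.not_gt
  have hθ : θ * dist (w 0) (w n) ≤ θ * ∑ i ∈ range n, dist (w i) (w (i + 1)) :=
    mul_le_mul_of_nonneg_left (dist_le_range_sum_dist w n) hθ0
  have hgap : (1 - θ) * ε ≤ (1 - θ) * dist (w j) (w (j + 1)) :=
    mul_le_mul_of_nonneg_left hlong (sub_nonneg.2 hθ1)
  unfold chainCost at hcost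
  linarith

lemma exists_le_dist_lt_of_dist_lt {w : ℕ → N} {n : ℕ} {r : ℝ}
    (hstep : ∀ i < n, dist (w i) (w (i + 1)) < ε) (hr : 0 < r) (hrn : r ≤ dist (w 0) (w n)) :
    ∃ k ≤ n, r ≤ dist (w 0) (w k) ∧ dist (w 0) (w k) < r + ε := by
  classical
  have hex : ∃ k, r ≤ dist (w 0) (w k) := ⟨n, hrn⟩
  obtain ⟨m, hm⟩ : ∃ m, Nat.find hex = m + 1 :=
    Nat.exists_eq_add_one_of_ne_zero fun h0 => by
      have := Nat.find_spec hex
      rw [h0, dist_self] at this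
      linarith
  have hkn : m + 1 ≤ n := hm ▸ Nat.find_min' hex hrn
  refine ⟨m + 1, hkn, hm ▸ Nat.find_spec hex, ?_⟩
  have hbefore : dist (w 0) (w m) < r := not_le.1 (Nat.find_min hex (hm ▸ m.lt_succ_self))
  linarith [dist_triangle (w 0) (w m) (w (m + 1)), hstep m hkn]

lemma dist_add_dist_le_sum_range_dist (w : ℕ → N) {k n : ℕ} (hkn : k ≤ n) :
    dist (w 0) (w k) + dist (w k) (w n) ≤ ∑ i ∈ range n, dist (w i) (w (i + 1)) := by
  rw [← sum_range_add_sum_Ico _ hkn]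
  exact add_le_add (dist_le_range_sum_dist w k) (dist_le_Ico_sum_dist w hkn)

lemma chainCost_eq_of_dist_lt {w : ℕ → N} {n : ℕ} (hstep : ∀ i < n, dist (w i) (w (i + 1)) < ε) :
    chainCost θ ε w n = θ * ∑ i ∈ range n, dist (w i) (w (i + 1)) := by
  rw [mul_sum]
  exact sum_congr rfl fun i hi => if_pos (hstep i (mem_range.1 hi))

lemma LocalDeltaCondition.exists_near {x y : N} (h : LocalDeltaCondition x y) {r η : ℝ}
    (hr : 0 < r) (hrd : r ≤ dist x y) (hη : 0 < η) :
    ∃ z, |dist z x - r| < η ∧ |dist z y - (dist x y - r)| < η := by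
  have hρ := h.chainDist_le (θ := 1 / 2) (by norm_num) (by norm_num) hη
  obtain ⟨_, ⟨w, n, rfl, rfl, rfl⟩, hcost⟩ := exists_lt_of_csInf_lt (chainCosts_nonempty _ _)
    (hρ.trans_lt (lt_add_of_pos_right _ (by positivity : 0 < η / 4)))
  have hstep := dist_lt_of_chainCost_le (by norm_num) (by norm_num) hcost.le (by linarith)
  obtain ⟨k, hkn, hrk, hkr⟩ := exists_le_dist_lt_of_dist_lt hstep hr hrd
  rw [chainCost_eq_of_dist_lt hstep] at hcost
  have hsum := dist_add_dist_le_sum_range_dist w hkn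
  have htri := dist_triangle (w 0) (w k) (w n)
  refine ⟨w k, ?_, ?_⟩ <;> rw [abs_lt] <;> constructor <;> linarith [dist_comm (w k) (w 0)]

lemma LocalDeltaCondition.exists_dist_eq [CompactSpace N] {x y : N} (h : LocalDeltaCondition x y)
    {r : ℝ} (hr : 0 < r) (hrd : r ≤ dist x y) :
    ∃ z, dist z x = r ∧ dist z y = dist x y - r := by
  set g : N → ℝ := fun z => |dist z x - r| + |dist z y - (dist x y - r)|
  obtain ⟨z, -, hmin⟩ := isCompact_univ.exists_isMinOn ⟨x, Set.mem_univ x⟩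
    (f := g) (by fun_prop)
  have hgz : g z ≤ 0 := le_of_forall_pos_le_add fun η hη => by
    obtain ⟨z', h1, h2⟩ := h.exists_near hr hrd (half_pos hη)
    have : g z ≤ g z' := hmin (Set.mem_univ z')
    linarith
  refine ⟨z, ?_, ?_⟩ <;> rw [← sub_eq_zero, ← abs_eq_zero] <;>
    linarith [abs_nonneg (dist z x - r), abs_nonneg (dist z y - (dist x y - r))]

lemma LocalDeltaCondition.of_lipschitzWith {x y : N}
    (γ : unitInterval → N) (hγ : LipschitzWith (nndist x y) γ) (hγ0 : γ 0 = x) (hγ1 : γ 1 = y) :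
    LocalDeltaCondition x y := by
  intro f hf θ hθ0 hθ1 hfxy ε hε
  by_contra! hflat
  obtain ⟨n, hn⟩ := exists_nat_gt (dist x y / ε)
  have hn0 : (0 : ℝ) < n := (div_nonneg dist_nonneg hε.le).trans_lt hn
  set t : ℕ → unitInterval := fun i => Set.projIcc 0 1 zero_le_one ((i : ℝ) / n)
  set w : ℕ → N := fun i => γ (t i)
  have hstep : ∀ i, dist (w i) (w (i + 1)) ≤ dist x y / n := fun i => calc
    _ ≤ dist x y * dist (t i) (t (i + 1)) := hγ.dist_le_mul _ _
    _ ≤ dist x y * dist ((i : ℝ) / n) ((i + 1 : ℕ) / n) := by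
      gcongr
      simpa [t] using (LipschitzWith.projIcc zero_le_one).dist_le_mul (i / n : ℝ) ((i + 1 : ℕ) / n)
    _ = dist x y / n := by
      rw [Real.dist_eq, ← sub_div, Nat.cast_succ, sub_add_cancel_left, abs_div, abs_neg,
        abs_one, abs_of_pos hn0, mul_one_div]
  have hmesh : dist x y / n < ε := by rwa [div_lt_iff₀ hn0, mul_comm, ← div_lt_iff₀ hε]
  have hlink : ∀ i, f (w i) - f (w (i + 1)) ≤ θ * (dist x y / n) := fun i => by
    rcases (dist_nonneg (x := w i) (y := w (i + 1))).eq_or_lt with h0 | hpos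
    · rw [dist_eq_zero.1 h0.symm, sub_self]
      positivity
    · exact (hflat _ _ hpos ((hstep i).trans_lt hmesh)).trans
        (mul_le_mul_of_nonneg_left (hstep i) hθ0.le)
  have htotal := sum_le_sum fun i (_ : i ∈ range n) => hlink i
  rw [sum_range_sub' (fun i => f (w i)), sum_const, card_range, nsmul_eq_mul] at htotal
  have hw0 : w 0 = x := by simpa [w, t] using hγ0
  have hwn : w n = y := by simpa [w, t, hn0.ne'] using hγ1
  rw [hw0, hwn, mul_left_comm, mul_div_cancel₀ _ hn0.ne'] at htotal
  linarith

end MetricSpace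

section NormedSpace

variable {E : Type*} [NormedAddCommGroup E] [NormedSpace ℝ E] {s : Set E} {x y : E}

lemma LocalDeltaCondition.of_segment_subset (hx : x ∈ s) (hy : y ∈ s) (h : segment ℝ x y ⊆ s) :
    LocalDeltaCondition (⟨x, hx⟩ : s) ⟨y, hy⟩ := by
  refine .of_lipschitzWith
    (fun t => ⟨AffineMap.lineMap x y (t : ℝ), h (segment_eq_image_lineMap ℝ x y ▸ ⟨t, t.2, rfl⟩)⟩)
    (.of_dist_le_mul fun t u => ?_) (by simp) (by simp)
  simp [Subtype.dist_eq, dist_lineMap_lineMap, mul_comm]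

/-- Strict convexity: `‖z - x‖ + ‖z - y‖ = ‖x - y‖` forces `z` onto `[x, y]`. -/
lemma segment_subset_of_forall_exists_norm_sub_eq [StrictConvexSpace ℝ E]
    (hx : x ∈ s) (hy : y ∈ s)
    (h : ∀ r : ℝ, 0 < r → r < ‖x - y‖ → ∃ z ∈ s, ‖z - x‖ = r ∧ ‖z - y‖ = ‖x - y‖ - r) :
    segment ℝ x y ⊆ s := by
  rw [segment_eq_image_lineMap]
  rintro _ ⟨t, ⟨ht0, ht1⟩, rfl⟩
  rcases ht0.eq_or_lt with rfl | ht0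
  · simpa
  rcases ht1.eq_or_lt with rfl | ht1
  · simpa
  rcases eq_or_ne x y with rfl | hxy
  · simpa
  have hd : 0 < ‖x - y‖ := norm_sub_pos_iff.2 hxy
  obtain ⟨z, hz, hzx, hzy⟩ := h (t * ‖x - y‖) (by positivity) (mul_lt_of_lt_one_left hd ht1)
  rwa [← eq_lineMap_of_dist_eq_mul_of_dist_eq_mul (x := x) (y := z) (z := y) (r := t)
    (by rw [dist_eq_norm', hzx, dist_eq_norm]) (by rw [dist_eq_norm, hzy, dist_eq_norm]; ring)]

end NormedSpace

theorem delta_point_iff_segment_compact_general {X : Type*} [NormedAddCommGroup X]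
    [NormedSpace ℝ X]
    (hsc : ∀ u v : X, ‖u‖ = 1 → ‖v‖ = 1 → u ≠ v → ‖u + v‖ < 2)
    (M : Set X) (hM : IsCompact M)
    (x y : X) (hx : x ∈ M) (hy : y ∈ M) :
    (LocalDeltaCondition (⟨x, hx⟩ : M) (⟨y, hy⟩ : M) ↔
      (∀ r : ℝ, 0 < r → r < ‖x - y‖ →
        ∃ z ∈ M, ‖z - x‖ = r ∧ ‖z - y‖ = ‖x - y‖ - r)) ∧
    ((∀ r : ℝ, 0 < r → r < ‖x - y‖ →
        ∃ z ∈ M, ‖z - x‖ = r ∧ ‖z - y‖ = ‖x - y‖ - r) ↔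
      (∀ t : ℝ, 0 ≤ t → t ≤ 1 → (1 - t) • x + t • y ∈ M)) := by
  have : StrictConvexSpace ℝ X :=
    .of_norm_add_ne_two fun u v hu hv huv => (hsc u v hu hv huv).ne
  have : CompactSpace M := isCompact_iff_compactSpace.1 hM
  have hseg : (∀ t : ℝ, 0 ≤ t → t ≤ 1 → (1 - t) • x + t • y ∈ M) ↔ segment ℝ x y ⊆ M := by
    rw [segment_eq_image, Set.image_subset_iff]
    simp only [Set.subset_def, Set.mem_preimage, Set.mem_Icc, and_imp]
  have h12 (h : LocalDeltaCondition (⟨x, hx⟩ : M) ⟨y, hy⟩) (r : ℝ) (hr : 0 < r)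
      (hrd : r < ‖x - y‖) : ∃ z ∈ M, ‖z - x‖ = r ∧ ‖z - y‖ = ‖x - y‖ - r := by
    obtain ⟨z, hzx, hzy⟩ :=
      h.exists_dist_eq hr (by rw [Subtype.dist_eq, dist_eq_norm]; exact hrd.le)
    simp only [Subtype.dist_eq, dist_eq_norm] at hzx hzy
    exact ⟨z, z.2, hzx, hzy⟩
  have h23 := fun h2 => hseg.2 (segment_subset_of_forall_exists_norm_sub_eq hx hy h2)
  have h31 := fun h3 => LocalDeltaCondition.of_segment_subset hx hy (hseg.1 h3)
  exact ⟨⟨h12, h31 ∘ h23⟩, ⟨h23, h12 ∘ h31⟩⟩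

/-- For a compact subset `M` of a strictly convex Banach space and `x ≠ y` in `M`:
`m_{x,y}` is a Δ-point iff all intermediate spheres meet `M` iff `[x,y] ⊆ M`. -/
theorem delta_point_iff_segment_compact {X : Type*} [NormedAddCommGroup X]
    [NormedSpace ℝ X] [CompleteSpace X]
    (hsc : ∀ u v : X, ‖u‖ = 1 → ‖v‖ = 1 → u ≠ v → ‖u + v‖ < 2)
    (M : Set X) (hM : IsCompact M)
    (x y : X) (hx : x ∈ M) (hy : y ∈ M) (hxy : x ≠ y) :
    (LocalDeltaCondition (⟨x, hx⟩ : M) (⟨y, hy⟩ : M) ↔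
      (∀ r : ℝ, 0 < r → r < ‖x - y‖ →
        ∃ z ∈ M, ‖z - x‖ = r ∧ ‖z - y‖ = ‖x - y‖ - r)) ∧
    ((∀ r : ℝ, 0 < r → r < ‖x - y‖ →
        ∃ z ∈ M, ‖z - x‖ = r ∧ ‖z - y‖ = ‖x - y‖ - r) ↔
      (∀ t : ℝ, 0 ≤ t → t ≤ 1 → (1 - t) • x + t • y ∈ M)) :=
  delta_point_iff_segment_compact_general hsc M hM x y hx hy
end
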